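/- arXiv:2409.11559 — 2 statements merged into one kernel-verified Lean document; each statement's English description precedes it below -/
import Mathlib

section
/- Let n ≥ 1 and let s_1, ..., s_n be integers. Then gcd(s_1, s_2 + ... + s_n) + Σ_{i=2}^n gcd(s_1, s_i) ≡ n·s_1 (mod 2). -/
/-! Modulo 2, `gcd a b` is odd exactly when `a` or `b` is, so `gcd a b ≡ a + b + a b`. Summing this
over the `n` gcds, the terms involving `s₂ + ⋯ + sₙ` appear twice and the `s₁`'s add up to `n s₁`. -/

theorem ZMod.natCast_gcd_eq_zero_iff (a b : ℤ) (m : ℕ) :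
    (Int.gcd a b : ZMod m) = 0 ↔ (a : ZMod m) = 0 ∧ (b : ZMod m) = 0 := by
  rw [← Int.cast_natCast]
  simp only [ZMod.intCast_zmod_eq_zero_iff_dvd, Int.dvd_coe_gcd_iff]

theorem ZMod.natCast_gcd_eq_add_add_mul (a b : ℤ) :
    (Int.gcd a b : ZMod 2) = a + b + a * b := by
  have key : ∀ g x y : ZMod 2, (g = 0 ↔ x = 0 ∧ y = 0) → g = x + y + x * y := by decide
  exact key _ _ _ (ZMod.natCast_gcd_eq_zero_iff a b 2)

theorem stmt3 (n : ℕ) (hn : 1 ≤ n) (s : ℕ → ℤ) :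
    (Int.gcd (s 1) (∑ i ∈ Finset.Icc 2 n, s i) : ℤ)
      + ∑ i ∈ Finset.Icc 2 n, (Int.gcd (s 1) (s i) : ℤ)
      ≡ (n : ℤ) * s 1 [ZMOD 2] := by
  rw [← Nat.cast_ofNat, ← ZMod.intCast_eq_intCast_iff]
  push_cast [ZMod.natCast_gcd_eq_add_add_mul, Finset.sum_add_distrib, ← Finset.mul_sum,
    Finset.sum_const, nsmul_eq_mul, Nat.card_Icc, Nat.cast_sub hn]
  have two_eq_zero : (2 : ZMod 2) = 0 := rfl
  linear_combination (∑ i ∈ Finset.Icc 2 n, (s i : ZMod 2)) * (1 + (s 1 : ZMod 2)) * two_eq_zero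
end

section
/- Let T be a decorated rooted tree with root v_0 that has negative determinants and satisfies f(α) ≥ 0 for all arrows α. If v and v' are vertices with v < v' in the tree order (v lies on the path from v_0 to v'), then: (a) N_v < 0 implies N_{v'} < 0; (b) N_v ≤ 0 implies N_{v'} ≤ 0. Consequently, the sets {v ∈ V : N_v ≥ 0} and {v ∈ V : N_v > 0} are connected subsets of the tree. -/
open Finset
open scoped Classical

/-- A decorated tree: a finite tree on cells `C = V ∪ A`, where `isArrow`
distinguishes arrows (of valency 1) from vertices.  `f a` is the decoration of
the arrow `a`, and `q x y` is the decoration of the edge `{x,y}` near `x`.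
Decorations at arrows are `1`; decorations near a vertex are pairwise coprime. -/
structure DecTree where
  C : Type
  [fintypeC : Fintype C]
  [decEqC : DecidableEq C]
  G : SimpleGraph C
  [decAdj : DecidableRel G.Adj]
  isTree : G.IsTree
  isArrow : C → Prop
  [decArrow : DecidablePred isArrow]
  arrowValency : ∀ a, isArrow a → G.degree a = 1
  f : C → ℤ
  q : C → C → ℤ
  q_arrow : ∀ a x, isArrow a → G.Adj a x → q a x = 1
  q_coprime : ∀ v x y, ¬ isArrow v → G.Adj v x → G.Adj v y → x ≠ y →
    IsCoprime (q v x) (q v y)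

attribute [instance] DecTree.fintypeC DecTree.decEqC DecTree.decAdj DecTree.decArrow

namespace DecTree

variable (T : DecTree)

/-- The unique path between two cells of the tree. -/
noncomputable def path (x y : T.C) : T.G.Walk x y :=
  (T.isTree.existsUnique_path x y).exists.choose

/-- `xva T v a` is the quantity `x_{v,a}`: the decoration `f a` times the
product of the decorations `q(ε,u)` over all edges `ε = {u,w}` incident to the
path from `v` to `a` (i.e. `u` on the path, `w` off the path). -/
noncomputable def xva (v a : T.C) : ℤ :=
  T.f a * ∏ uw ∈ Finset.univ.filter (fun uw : T.C × T.C =>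
      uw.1 ∈ (T.path v a).support ∧ T.G.Adj uw.1 uw.2 ∧
        uw.2 ∉ (T.path v a).support),
    T.q uw.1 uw.2

/-- `xhat T v a` is `x̂_{v,a}`: as `x_{v,a}` but omitting edges incident to `v`. -/
noncomputable def xhat (v a : T.C) : ℤ :=
  T.f a * ∏ uw ∈ Finset.univ.filter (fun uw : T.C × T.C =>
      uw.1 ∈ (T.path v a).support ∧ uw.1 ≠ v ∧ T.G.Adj uw.1 uw.2 ∧
        uw.2 ∉ (T.path v a).support),
    T.q uw.1 uw.2

/-- The multiplicity `N_v = Σ_{α ∈ A∖A₀} x_{v,α}`. -/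
noncomputable def N (v : T.C) : ℤ :=
  ∑ a ∈ Finset.univ.filter (fun a => T.isArrow a ∧ T.f a ≠ 0), T.xva v a

/-- The multiplicity of the tree, `M(T) = -Σ_{v ∈ V∪A₀} N_v (δ_v - 2)`. -/
noncomputable def M : ℤ :=
  - ∑ v ∈ Finset.univ.filter (fun v => ¬ T.isArrow v ∨ T.f v = 0),
      T.N v * ((T.G.degree v : ℤ) - 2)

/-- `p(α, e_α) = Σ_{β ∈ (A∖A₀)∖{α}} x̂_{α,β}` for an arrow `α`. -/
noncomputable def parrow (a : T.C) : ℤ :=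
  ∑ b ∈ Finset.univ.filter (fun b => T.isArrow b ∧ T.f b ≠ 0 ∧ b ≠ a), T.xhat a b

/-- `F(T) = Σ_{α ∈ A∖A₀} gcd(f(α), p(α, e_α))`. -/
noncomputable def F : ℤ :=
  ∑ a ∈ Finset.univ.filter (fun a => T.isArrow a ∧ T.f a ≠ 0),
    (Int.gcd (T.f a) (T.parrow a) : ℤ)

/-- `Q(e,x)` for `e = {x,y}`: product of the decorations near `x` of the
other edges incident to `x`. -/
noncomputable def Qe (x y : T.C) : ℤ :=
  ∏ w ∈ (T.G.neighborFinset x).erase y, T.q x w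

/-- `lt T v0 x y` means `x < y` in the order rooted at `v0`:
`x ≠ y` and `x` lies on the path from `v0` to `y`. -/
def lt (v0 x y : T.C) : Prop :=
  x ≠ y ∧ x ∈ (T.path v0 y).support

/-- `v0` is a root: a vertex all of whose edge decorations are `1`, such that
for every other vertex `v`, all edges at `v` not on the path `γ_{v0,v}` have
decoration `≥ 1` near `v`, at most one of them being `> 1`. -/
def IsRoot (v0 : T.C) : Prop :=
  ¬ T.isArrow v0 ∧
  (∀ x, T.G.Adj v0 x → T.q v0 x = 1) ∧
  ∀ v, ¬ T.isArrow v → v ≠ v0 →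
    (∀ x, T.G.Adj v x → s(v, x) ∉ (T.path v0 v).edges → 1 ≤ T.q v x) ∧
    (∀ x y, T.G.Adj v x → T.G.Adj v y →
      s(v, x) ∉ (T.path v0 v).edges → s(v, y) ∉ (T.path v0 v).edges →
      1 < T.q v x → 1 < T.q v y → x = y)

/-- The tree has negative determinants: `det(e) < 0` for every edge `e`
joining two vertices. -/
def HasNegDet : Prop :=
  ∀ x y, ¬ T.isArrow x → ¬ T.isArrow y → T.G.Adj x y →
    T.q x y * T.q y x - T.Qe x y * T.Qe y x < 0

/-- A subset `S` of the cells is connected if every path whose endpoints lie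
in `S` lies entirely in `S`. -/
def ConnectedSet (S : Set T.C) : Prop :=
  ∀ x y, x ∈ S → y ∈ S → ∀ u, u ∈ (T.path x y).support → u ∈ S

/-- `φ(x,y)`: product of `q(ε,u)` over cells `u ≠ x` of the path from `x` to
`y` and edges `ε` incident to `u` not lying on the path. -/
noncomputable def phi (x y : T.C) : ℤ :=
  ∏ uw ∈ Finset.univ.filter (fun uw : T.C × T.C =>
      uw.1 ∈ (T.path x y).support ∧ uw.1 ≠ x ∧ T.G.Adj uw.1 uw.2 ∧
        uw.2 ∉ (T.path x y).support),
    T.q uw.1 uw.2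

end DecTree

/-!
Let `v'` be a child of `v`, i.e. `v` is adjacent to `v'` and lies on the path from the root to
`v'`. Write `y_a` for `x_{v',a}` without the factor `q(v',v)`. If the arrow `a` lies beyond `v'`,
then `x_{v',a} = q(v',v) y_a` and `x_{v,a} = Q(v,v') y_a`, so `a` contributes `det(e) y_a ≤ 0` to
`q(v,v') N_{v'} - Q(v',v) N_v`: the root condition makes every decoration in `y_a` at least `1`.
If `a` lies on the side of `v`, the roles of `v` and `v'` swap and the contribution is `0`.
Hence `q(v,v') N_{v'} ≤ Q(v',v) N_v` with `q(v,v'), Q(v',v) ≥ 1`, so `N < 0` and `N ≤ 0` pass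
from parents to children, and then along the tree order. Connectedness follows because every
vertex of the path from `x` to `y` lies on the path from the root to `x` or to `y`.
-/

namespace SimpleGraph

variable {V : Type*} [Fintype V] (G : SimpleGraph V) [DecidableRel G.Adj]

noncomputable def edgeBoundary (S : Set V) : Finset (V × V) :=
  univ.filter fun uw => uw.1 ∈ S ∧ G.Adj uw.1 uw.2 ∧ uw.2 ∉ S

variable {G}

@[simp]
lemma mem_edgeBoundary {S : Set V} {uw : V × V} :
    uw ∈ G.edgeBoundary S ↔ uw.1 ∈ S ∧ G.Adj uw.1 uw.2 ∧ uw.2 ∉ S := by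
  simp [edgeBoundary]

lemma prod_edgeBoundary_insert [DecidableEq V] {M : Type*} [CommMonoid M] (g : V × V → M)
    {S : Set V} {v v' : V} (hv : v ∉ S) (hv' : v' ∈ S)
    (huniq : ∀ w ∈ S, G.Adj v w → w = v') :
    ∏ uw ∈ G.edgeBoundary (insert v S), g uw =
      (∏ w ∈ (G.neighborFinset v).erase v', g (v, w)) *
        ∏ uw ∈ (G.edgeBoundary S).erase (v', v), g uw := by
  rw [← prod_filter_mul_prod_filter_not _ (fun uw => uw.1 = v),
    ← prod_image (f := g) (s := (G.neighborFinset v).erase v') (g := fun w => (v, w))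
      (by simp [Set.InjOn])]
  congr 2 <;> ext ⟨u, w⟩
  · simp only [mem_filter, mem_edgeBoundary, Set.mem_insert_iff, mem_image, mem_erase,
      mem_neighborFinset, Prod.mk.injEq]
    have := G.irrefl (v := v)
    grind
  · simp only [mem_filter, mem_edgeBoundary, Set.mem_insert_iff, mem_erase, ne_eq,
      Prod.mk.injEq]
    grind [G.adj_symm]

end SimpleGraph

namespace DecTree

open SimpleGraph Walk

variable (T : DecTree)

lemma path_isPath (x y : T.C) : (T.path x y).IsPath :=
  (T.isTree.existsUnique_path x y).exists.choose_spec

variable {T}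

lemma eq_path {x y : T.C} {p : T.G.Walk x y} (hp : p.IsPath) : p = T.path x y :=
  (T.isTree.existsUnique_path x y).unique hp (T.path_isPath x y)

lemma mem_support_path_comm {x y z : T.C} :
    x ∈ (T.path y z).support ↔ x ∈ (T.path z y).support := by
  rw [← eq_path (T.path_isPath z y).reverse, support_reverse, List.mem_reverse]

lemma path_eq_append {a b c : T.C} (h : b ∈ (T.path a c).support) :
    T.path a c = (T.path a b).append (T.path b c) := by
  rw [← eq_path ((T.path_isPath a c).takeUntil h), ← eq_path ((T.path_isPath a c).dropUntil h),
    take_spec]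

lemma support_path_subset_left {a b c : T.C} (h : b ∈ (T.path a c).support) :
    (T.path a b).support ⊆ (T.path a c).support := by
  rw [path_eq_append h, support_append]
  exact List.subset_append_left _ _

lemma path_cons {v v' a : T.C} (hadj : T.G.Adj v v') (hv : v ∉ (T.path v' a).support) :
    T.path v a = cons hadj (T.path v' a) :=
  (eq_path ((T.path_isPath v' a).cons hv)).symm

lemma mem_support_path_or {a b c x : T.C} (hx : x ∈ (T.path a c).support) :
    x ∈ (T.path a b).support ∨ x ∈ (T.path b c).support := by
  have := ((T.path a b).append (T.path b c)).support_bypass_subset_support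
    (by rwa [eq_path (bypass_isPath _)])
  rwa [mem_support_append_iff] at this

lemma not_mem_support_path_of_adj {x y a : T.C} (hadj : T.G.Adj x y)
    (hx : x ∈ (T.path y a).support) : y ∉ (T.path x a).support := by
  rw [mem_support_path_comm] at hx ⊢
  exact T.isTree.isAcyclic.ne_mem_support_of_support_of_adj_of_isPath (T.path_isPath a y)
    (T.path_isPath a x) hadj.symm hx

lemma eq_of_adj_of_mem_support_path {u x w w' : T.C} (hw : T.G.Adj u w) (hw' : T.G.Adj u w')
    (hwx : w ∈ (T.path u x).support) (hw'x : w' ∈ (T.path u x).support) : w = w' :=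
  (T.isTree.isAcyclic.eq_snd_of_adj_start (T.path_isPath u x) hw hwx).trans
    (T.isTree.isAcyclic.eq_snd_of_adj_start (T.path_isPath u x) hw' hw'x).symm

lemma exists_path_eq_cons {u x : T.C} (h : u ≠ x) :
    ∃ s, ∃ hs : T.G.Adj u s, T.path u x = cons hs (T.path s x) := by
  cases hp : T.path u x with
  | nil => exact absurd rfl h
  | cons hs p =>
    have := T.path_isPath u x
    rw [hp, cons_isPath_iff] at this
    exact ⟨_, hs, by rw [eq_path this.1]⟩

lemma eq_of_adj_of_isArrow {a x y : T.C} (ha : T.isArrow a) (hx : T.G.Adj a x)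
    (hy : T.G.Adj a y) : x = y := by
  have hcard : (T.G.neighborFinset a).card ≤ 1 := by
    rw [card_neighborFinset_eq_degree, T.arrowValency a ha]
  exact Finset.card_le_one.mp hcard x (by simpa using hx) y (by simpa using hy)

lemma not_isArrow_of_mem_support_path {x y u : T.C} (hx : ¬ T.isArrow x) (hy : ¬ T.isArrow y)
    (hu : u ∈ (T.path x y).support) : ¬ T.isArrow u := by
  intro ha
  have hux : u ≠ x := fun h => hx (h ▸ ha)
  have huy : u ≠ y := fun h => hy (h ▸ ha)
  obtain ⟨s, hs, hpx⟩ := exists_path_eq_cons hux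
  obtain ⟨s', hs', hpy⟩ := exists_path_eq_cons huy
  obtain rfl := eq_of_adj_of_isArrow ha hs hs'
  have hsx := T.path_isPath u x
  have hsy := T.path_isPath u y
  rw [hpx, cons_isPath_iff] at hsx
  rw [hpy, cons_isPath_iff] at hsy
  rcases mem_support_path_or (b := s) hu with h | h
  · exact hsx.2 (mem_support_path_comm.mp h)
  · exact hsy.2 h

lemma mem_support_path_induction {v0 : T.C} (P : T.C → Prop)
    (hstep : ∀ ⦃v v'⦄, ¬ T.isArrow v → ¬ T.isArrow v' → T.G.Adj v v' →
      v ∈ (T.path v0 v').support → P v → P v')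
    {v x : T.C} (hv : ¬ T.isArrow v) (hx : ¬ T.isArrow x) (hvx : v ∈ (T.path v0 x).support)
    (hP : P v) : P x := by
  suffices key : ∀ (p : T.G.Walk v x), ((T.path v0 v).append p).IsPath → P x from
    key _ (path_eq_append hvx ▸ T.path_isPath v0 x)
  intro p hp
  clear hvx
  induction p with
  | nil => exact hP
  | @cons v u x h p ih =>
    rw [← concat_append] at hp
    have hu : (T.path v0 v).concat h = T.path v0 u := eq_path hp.of_append_left
    have hu_na : ¬ T.isArrow u := by
      refine not_isArrow_of_mem_support_path hv hx ?_
      rw [← eq_path (concat_append _ h p ▸ hp).of_append_right]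
      simp
    exact ih hu_na hx (hstep hv hu_na h (by simp [← hu]) hP) (hu ▸ hp)

lemma connectedSet_of_mem_support_path {v0 : T.C} (P : T.C → Prop)
    (hP : ∀ ⦃v v'⦄, ¬ T.isArrow v → ¬ T.isArrow v' → v ∈ (T.path v0 v').support →
      P v' → P v) :
    T.ConnectedSet {v | ¬ T.isArrow v ∧ P v} := by
  rintro x y ⟨hx, hPx⟩ ⟨hy, hPy⟩ u hu
  have hu_na := not_isArrow_of_mem_support_path hx hy hu
  rcases mem_support_path_or (b := v0) hu with h | h
  · exact ⟨hu_na, hP hu_na hx (mem_support_path_comm.mp h) hPx⟩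
  · exact ⟨hu_na, hP hu_na hy h hPy⟩

lemma IsRoot.one_le_q {v0 u w : T.C} (hroot : T.IsRoot v0) (hadj : T.G.Adj u w)
    (hw : w ∉ (T.path u v0).support) : 1 ≤ T.q u w := by
  by_cases hu : T.isArrow u
  · rw [T.q_arrow u w hu hadj]
  by_cases hu0 : u = v0
  · subst hu0
    rw [hroot.2.1 w hadj]
  exact (hroot.2.2 u hu hu0).1 w hadj fun he =>
    hw (mem_support_path_comm.mp ((T.path v0 u).snd_mem_support_of_mem_edges he))

lemma IsRoot.one_le_q_parent {v0 v v' : T.C} (hroot : T.IsRoot v0) (hadj : T.G.Adj v v')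
    (hvv' : v ∈ (T.path v0 v').support) : 1 ≤ T.q v v' :=
  hroot.one_le_q hadj (not_mem_support_path_of_adj hadj (mem_support_path_comm.mp hvv'))

lemma IsRoot.one_le_Qe_child {v0 v v' : T.C} (hroot : T.IsRoot v0) (hadj : T.G.Adj v v')
    (hvv' : v ∈ (T.path v0 v').support) : 1 ≤ T.Qe v' v :=
  Finset.one_le_prod fun w hw => by
    obtain ⟨hwv, hw⟩ := Finset.mem_erase.mp hw
    rw [mem_neighborFinset] at hw
    exact hroot.one_le_q hw fun h => hwv
      (eq_of_adj_of_mem_support_path hw hadj.symm h (mem_support_path_comm.mp hvv'))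

lemma IsRoot.one_le_q_of_not_mem_support_path {v0 v v' u w : T.C} (hroot : T.IsRoot v0)
    (hadj : T.G.Adj v v') (hvv' : v ∈ (T.path v0 v').support)
    (hv : v ∉ (T.path v' u).support) (huw : T.G.Adj u w) (hw : w ∉ (T.path v' u).support)
    (hne : (u, w) ≠ (v', v)) : 1 ≤ T.q u w := by
  have hv'u : v' ∈ (T.path u v0).support := by
    have hvu : v ∈ (T.path v0 u).support :=
      (mem_support_path_or hvv').resolve_right (mt mem_support_path_comm.mp hv)
    rw [mem_support_path_comm, path_eq_append hvu, path_cons hadj hv]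
    simp
  -- `u` has a single neighbour on its path to the root: `v` if `u = v'`, else one towards `v'`.
  refine hroot.one_le_q huw fun hwu => ?_
  rcases eq_or_ne u v' with rfl | huv'
  · exact hne (by rw [eq_of_adj_of_mem_support_path huw hadj.symm hwu
      (by rw [mem_support_path_comm, path_eq_append hvv', support_append]; simp)])
  · obtain ⟨s, hs, hsu⟩ := exists_path_eq_cons huv'
    have hs_mem : s ∈ (T.path u v0).support := support_path_subset_left hv'u (by simp [hsu])
    obtain rfl := eq_of_adj_of_mem_support_path huw hs hwu hs_mem
    exact hw (mem_support_path_comm.mp (by simp [hsu]))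

variable (T)

noncomputable def xvaErase (v' v a : T.C) : ℤ :=
  T.f a * ∏ uw ∈ (T.G.edgeBoundary {x | x ∈ (T.path v' a).support}).erase (v', v),
    T.q uw.1 uw.2

variable {T}

lemma xva_eq_prod_edgeBoundary (v a : T.C) :
    T.xva v a = T.f a * ∏ uw ∈ T.G.edgeBoundary {x | x ∈ (T.path v a).support},
      T.q uw.1 uw.2 := by
  rw [xva, edgeBoundary]
  congr 2
  ext
  simp

lemma xva_eq_q_mul_xvaErase {v v' a : T.C} (hadj : T.G.Adj v v')
    (hv : v ∉ (T.path v' a).support) : T.xva v' a = T.q v' v * T.xvaErase v' v a := by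
  rw [xva_eq_prod_edgeBoundary, xvaErase, ← Finset.mul_prod_erase _ _
    (by simp [hadj.symm, hv] : (v', v) ∈ _)]
  ring

lemma xva_eq_Qe_mul_xvaErase {v v' a : T.C} (hadj : T.G.Adj v v')
    (hv : v ∉ (T.path v' a).support) : T.xva v a = T.Qe v v' * T.xvaErase v' v a := by
  have hsupp : {x | x ∈ (T.path v a).support} =
      insert v ({x | x ∈ (T.path v' a).support} : Set T.C) := by
    ext; simp [path_cons hadj hv]
  rw [xva_eq_prod_edgeBoundary, xvaErase, hsupp,
    prod_edgeBoundary_insert (S := {x | x ∈ (T.path v' a).support}) _ hv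
      (T.path v' a).start_mem_support, Qe]
  · ring
  · intro w hw hvw
    exact eq_of_adj_of_mem_support_path (x := a) hvw hadj
      (by rw [path_cons hadj hv]; exact List.mem_cons_of_mem _ hw) (by simp [path_cons hadj hv])

lemma IsRoot.xvaErase_nonneg {v0 v v' a : T.C} (hroot : T.IsRoot v0) (hadj : T.G.Adj v v')
    (hvv' : v ∈ (T.path v0 v').support) (hv : v ∉ (T.path v' a).support) (ha : 0 ≤ T.f a) :
    0 ≤ T.xvaErase v' v a := by
  refine mul_nonneg ha (Finset.prod_nonneg fun uw huw => zero_le_one.trans ?_)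
  obtain ⟨hne, hu, huw, hw⟩ := by simpa using huw
  have hsub := support_path_subset_left hu
  exact hroot.one_le_q_of_not_mem_support_path hadj hvv' (fun h => hv (hsub h)) huw
    (fun h => hw (hsub h)) hne

lemma q_mul_xva_le {v0 v v' a : T.C} (hroot : T.IsRoot v0) (hneg : T.HasNegDet)
    (hv : ¬ T.isArrow v) (hv' : ¬ T.isArrow v') (hadj : T.G.Adj v v')
    (hvv' : v ∈ (T.path v0 v').support) (ha : 0 ≤ T.f a) :
    T.q v v' * T.xva v' a ≤ T.Qe v' v * T.xva v a := by
  by_cases hva : v ∈ (T.path v' a).support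
  · have hv'a := not_mem_support_path_of_adj hadj hva
    rw [xva_eq_q_mul_xvaErase hadj.symm hv'a, xva_eq_Qe_mul_xvaErase hadj.symm hv'a]
    exact le_of_eq (by ring)
  · rw [xva_eq_q_mul_xvaErase hadj hva, xva_eq_Qe_mul_xvaErase hadj hva]
    have hdet := hneg v v' hv hv' hadj
    have hy := hroot.xvaErase_nonneg hadj hvv' hva ha
    nlinarith

lemma q_mul_N_le {v0 v v' : T.C} (hroot : T.IsRoot v0) (hneg : T.HasNegDet)
    (hf : ∀ a, T.isArrow a → 0 ≤ T.f a) (hv : ¬ T.isArrow v) (hv' : ¬ T.isArrow v')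
    (hadj : T.G.Adj v v') (hvv' : v ∈ (T.path v0 v').support) :
    T.q v v' * T.N v' ≤ T.Qe v' v * T.N v := by
  simp only [N, Finset.mul_sum]
  exact Finset.sum_le_sum fun a ha =>
    q_mul_xva_le hroot hneg hv hv' hadj hvv' (hf a (Finset.mem_filter.mp ha).2.1)

lemma N_neg_of_adj {v0 v v' : T.C} (hroot : T.IsRoot v0) (hneg : T.HasNegDet)
    (hf : ∀ a, T.isArrow a → 0 ≤ T.f a) (hv : ¬ T.isArrow v) (hv' : ¬ T.isArrow v')
    (hadj : T.G.Adj v v') (hvv' : v ∈ (T.path v0 v').support) (hN : T.N v < 0) : T.N v' < 0 := by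
  have hle := q_mul_N_le hroot hneg hf hv hv' hadj hvv'
  have hq := hroot.one_le_q_parent hadj hvv'
  have hQ := hroot.one_le_Qe_child hadj hvv'
  nlinarith

lemma N_nonpos_of_adj {v0 v v' : T.C} (hroot : T.IsRoot v0) (hneg : T.HasNegDet)
    (hf : ∀ a, T.isArrow a → 0 ≤ T.f a) (hv : ¬ T.isArrow v) (hv' : ¬ T.isArrow v')
    (hadj : T.G.Adj v v') (hvv' : v ∈ (T.path v0 v').support) (hN : T.N v ≤ 0) :
    T.N v' ≤ 0 := by
  have hle := q_mul_N_le hroot hneg hf hv hv' hadj hvv'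
  have hq := hroot.one_le_q_parent hadj hvv'
  have hQ := hroot.one_le_Qe_child hadj hvv'
  nlinarith

lemma N_neg_of_mem_support_path {v0 v v' : T.C} (hroot : T.IsRoot v0) (hneg : T.HasNegDet)
    (hf : ∀ a, T.isArrow a → 0 ≤ T.f a) (hv : ¬ T.isArrow v) (hv' : ¬ T.isArrow v')
    (hvv' : v ∈ (T.path v0 v').support) : T.N v < 0 → T.N v' < 0 :=
  mem_support_path_induction (fun x => T.N x < 0)
    (fun _ _ hv hv' hadj hvv' => N_neg_of_adj hroot hneg hf hv hv' hadj hvv') hv hv' hvv'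

lemma N_nonpos_of_mem_support_path {v0 v v' : T.C} (hroot : T.IsRoot v0)
    (hneg : T.HasNegDet) (hf : ∀ a, T.isArrow a → 0 ≤ T.f a) (hv : ¬ T.isArrow v)
    (hv' : ¬ T.isArrow v') (hvv' : v ∈ (T.path v0 v').support) : T.N v ≤ 0 → T.N v' ≤ 0 :=
  mem_support_path_induction (fun x => T.N x ≤ 0)
    (fun _ _ hv hv' hadj hvv' => N_nonpos_of_adj hroot hneg hf hv hv' hadj hvv') hv hv' hvv'

end DecTree

/-- In a decorated rooted tree with negative determinants and nonnegative
arrow decorations: if `v < v'` are vertices then `N_v < 0 → N_{v'} < 0` and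
`N_v ≤ 0 → N_{v'} ≤ 0`; moreover the sets of vertices with `N_v ≥ 0` and with
`N_v > 0` are connected. -/
theorem stmt14 (T : DecTree) (v0 : T.C) (hroot : T.IsRoot v0)
    (hneg : T.HasNegDet) (hf : ∀ a, T.isArrow a → 0 ≤ T.f a) :
    (∀ v v', ¬ T.isArrow v → ¬ T.isArrow v' → T.lt v0 v v' →
      (T.N v < 0 → T.N v' < 0) ∧ (T.N v ≤ 0 → T.N v' ≤ 0)) ∧
    T.ConnectedSet {v | ¬ T.isArrow v ∧ 0 ≤ T.N v} ∧
    T.ConnectedSet {v | ¬ T.isArrow v ∧ 0 < T.N v} := by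
  refine ⟨fun v v' hv hv' hlt => ⟨DecTree.N_neg_of_mem_support_path hroot hneg hf hv hv' hlt.2,
    DecTree.N_nonpos_of_mem_support_path hroot hneg hf hv hv' hlt.2⟩, ?_, ?_⟩
  · exact DecTree.connectedSet_of_mem_support_path _ fun v v' hv hv' hvv' hN => not_lt.mp fun h =>
      (DecTree.N_neg_of_mem_support_path hroot hneg hf hv hv' hvv' h).not_ge hN
  · exact DecTree.connectedSet_of_mem_support_path _ fun v v' hv hv' hvv' hN => not_le.mp fun h =>
      (DecTree.N_nonpos_of_mem_support_path hroot hneg hf hv hv' hvv' h).not_gt hN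
end
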